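/- Let λ ∈ (0,1) and let the parameters lie in P_NI ∪ P_SP with β_A ≠ β_H. Set p★ := α_A^λ·α_H^{1−λ}, q★ := β_A^λ·β_H^{1−λ} (so 0 < q★ < β_λ), x₀ := x₀^{(q★)}, d_T := q★·e^{x₀} ∈ (0,1) and Γ := (q★/2)·e^{x₀}·x₀². For n ≥ 1 define ζ_n := Γ·d_T^{n−1}·(1−d_T^n)/(1−d_T), ϑ_n := (p★/q★)·Γ·((1−d_T^n)/(1−d_T)²)·(1 − d_T·(1+d_T^n)/(1+d_T)), and C_n^L := exp( x₀·(ω₀ − (p★/q★)·d_T/(1−d_T))·(1−d_T^n) + ((p★/q★)·(β_λ + x₀) − α_λ)·n + ζ_n·ω₀ + ϑ_n ). Then for every ω₀ ≥ 1: (a) H_{λ,n} > C_n^L for all n ≥ 1, with ζ_n > 0 and ϑ_n ≥ 0; (b) (C_n^L)_{n≥1} is strictly decreasing; (c) C_n^L < exp( a_n^{(q★)}·ω₀ + Σ_{k=1}^{n} b_k^{(p★,q★)} ) for all n ≥ 1; (d) lim_{n→∞} C_n^L = 0 if α_A > 0 and α_H > 0, while lim_{n→∞} C_n^L = exp(ω₀·x₀)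 if α_A = α_H = 0; (e) lim_{n→∞} (1/n)·log C_n^L = (p★/q★)·(x₀ + β_λ) − α_λ. -/

import Mathlib

/-
The Hellinger integrals satisfy `H_{n+1}(x) = ∑_y h(x, y) H_n(y)`, where the one-step kernel
`h(x, ·)` is `exp (-(β_λ x + α_λ))` times the Poisson weights of the geometric mean
`g(x) = f_A(x)^λ f_H(x)^(1-λ)`. By Hölder `g(x) ≥ q★ x + p★`, so the Poisson generating function
gives by induction `H_n(ω₀) ≥ exp (a_n ω₀ + ∑_{k ≤ n} b_k)`, and `b_k = (p★/q★)(a_k + β_λ) - α_λ`.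

With `d = q★ e^{x₀}`, the shifted sequence `u_k = a_k - x₀` satisfies `u_{k+1} = d (e^{u_k} - 1)`,
`u₀ = -x₀`. The minorant `e^u - 1 > u + u²/2` propagates the bound
`u_k ≥ -x₀ d^k + (x₀²/2) d^k (1 - d^k) / (1 - d)`, i.e. `a_k ≥ L_k` (strictly for `k ≥ 1`), and
`log C_n^L` is `a_n ω₀ + ∑ b_k` with every `a_k` replaced by `L_k`. This gives (a) and (c); (d) and
(e) are read off the closed form, which is linear in `n` plus a continuous function of `d^n`;
(b) reduces to `L_{k+1} < L_k`, a consequence of `q★ < β_λ` and the cubic Taylor bound of `exp`.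
-/

open Real Filter

/-- One transition weight of the Poisson Galton–Watson process with immigration:
probability that the next generation size is `y` given the previous size is `x`. -/
noncomputable def gwStep (β α : ℝ) (x y : ℕ) : ℝ :=
  Real.exp (-(β * (x : ℝ) + α)) * (β * (x : ℝ) + α) ^ y / (Nat.factorial y : ℝ)

/-- The `n`-step path law (pmf on `Fin n → ℕ`) with initial generation size `ω₀`. -/
noncomputable def gwPath (β α : ℝ) (ω₀ n : ℕ) (ω : Fin n → ℕ) : ℝ :=
  ∏ k : Fin n,
    gwStep β α
      (if (k : ℕ) = 0 then ω₀ else ω ⟨(k : ℕ) - 1, Nat.lt_of_le_of_lt (Nat.sub_le _ _) k.2⟩)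
      (ω k)

noncomputable def hellinger (βA αA βH αH lam : ℝ) (ω₀ n : ℕ) : ℝ :=
  ∑' ω : Fin n → ℕ, gwPath βA αA ω₀ n ω ^ lam * gwPath βH αH ω₀ n ω ^ (1 - lam)

noncomputable def aSeq (q βl : ℝ) : ℕ → ℝ
  | 0 => 0
  | n + 1 => q * Real.exp (aSeq q βl n) - βl

noncomputable def bSeq (p q βl αl : ℝ) : ℕ → ℝ
  | 0 => 0
  | n + 1 => p * Real.exp (aSeq q βl n) - αl

open Finset Topology

lemma cubic_le_exp_of_nonneg {x : ℝ} (hx : 0 ≤ x) : 1 + x + x ^ 2 / 2 + x ^ 3 / 6 ≤ exp x := by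
  have h := sum_le_exp_of_nonneg hx 4
  norm_num [Finset.sum_range_succ, Nat.factorial] at h
  linarith

lemma sq_mul_lt_of_mul_exp_sub_one_lt {d u : ℝ} (hu : 0 < u) (hd : 0 < d)
    (h : d * (exp u - 1) < u) : u ^ 2 / 2 * (d * (1 + d) - 1) < u * (1 - d) := by
  have hcube : d * (u + u ^ 2 / 2 + u ^ 3 / 6) < u := by
    nlinarith [cubic_le_exp_of_nonneg hu.le]
  have hc : 0 < 1 - d * (1 + (u / 2 + u ^ 2 / 6)) := by
    have : u * (d * (1 + (u / 2 + u ^ 2 / 6))) < u * 1 := by nlinarith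
    linarith [(mul_lt_mul_iff_right₀ hu).1 this]
  have hd1 : d < 1 := by nlinarith
  nlinarith [mul_pos hu hc, mul_pos (mul_pos hu hd) (mul_pos hu hu),
    mul_pos (mul_pos hu hu) (mul_pos (sub_pos.2 hd1) (by linarith : (0:ℝ) < 1 + d))]

lemma geom_mean_add_geom_mean_le {lam a₁ a₂ b₁ b₂ : ℝ} (h0 : 0 < lam) (h1 : lam < 1)
    (ha₁ : 0 ≤ a₁) (ha₂ : 0 ≤ a₂) (hb₁ : 0 ≤ b₁) (hb₂ : 0 ≤ b₂) :
    a₁ ^ lam * b₁ ^ (1 - lam) + a₂ ^ lam * b₂ ^ (1 - lam)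
      ≤ (a₁ + a₂) ^ lam * (b₁ + b₂) ^ (1 - lam) := by
  have h1' : 0 < 1 - lam := sub_pos.2 h1
  have holder := inner_le_Lp_mul_Lq_of_nonneg univ (HolderConjugate.inv_one_sub_inv h0 h1)
    (f := ![a₁ ^ lam, a₂ ^ lam]) (g := ![b₁ ^ (1 - lam), b₂ ^ (1 - lam)])
    (by intro i; fin_cases i <;> simp <;> positivity)
    (by intro i; fin_cases i <;> simp <;> positivity)
  simpa [Fin.sum_univ_two, ← rpow_mul, ha₁, ha₂, hb₁, hb₂, h0.ne', h1'.ne'] using holder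

lemma geom_mean_mul_add_le {lam b₁ b₂ a₁ a₂ x : ℝ} (h0 : 0 < lam) (h1 : lam < 1)
    (hb₁ : 0 ≤ b₁) (hb₂ : 0 ≤ b₂) (ha₁ : 0 ≤ a₁) (ha₂ : 0 ≤ a₂) (hx : 0 ≤ x) :
    b₁ ^ lam * b₂ ^ (1 - lam) * x + a₁ ^ lam * a₂ ^ (1 - lam)
      ≤ (b₁ * x + a₁) ^ lam * (b₂ * x + a₂) ^ (1 - lam) := by
  have hlin : (b₁ * x) ^ lam * (b₂ * x) ^ (1 - lam) = b₁ ^ lam * b₂ ^ (1 - lam) * x := by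
    rw [mul_rpow hb₁ hx, mul_rpow hb₂ hx, mul_mul_mul_comm, ← rpow_add' hx (by norm_num)]
    norm_num
  rw [← hlin]
  exact geom_mean_add_geom_mean_le h0 h1 (by positivity) ha₁ (by positivity) ha₂

lemma tendsto_exp_nhds_zero_of_sub_mul {E : ℕ → ℝ} {M s : ℝ}
    (h : Tendsto (fun n => E n - M * n) atTop (𝓝 s)) (hM : M < 0) :
    Tendsto (fun n => exp (E n)) atTop (𝓝 0) := by
  refine tendsto_exp_atBot.comp ?_
  simpa using h.add_atBot (tendsto_natCast_atTop_atTop.const_mul_atTop_of_neg hM)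

lemma tendsto_inv_mul_of_sub_mul {E : ℕ → ℝ} {M s : ℝ}
    (h : Tendsto (fun n => E n - M * n) atTop (𝓝 s)) :
    Tendsto (fun n : ℕ => 1 / (n : ℝ) * E n) atTop (𝓝 M) := by
  have := (tendsto_one_div_atTop_nhds_zero_nat.mul h).add_const M
  rw [zero_mul, zero_add] at this
  refine this.congr' ?_
  filter_upwards [eventually_ne_atTop 0] with n hn
  field_simp
  ring

lemma one_sub_mul_one_add_pow_div_nonneg {d : ℝ} (hd0 : 0 ≤ d) (hd1 : d ≤ 1) (n : ℕ) :
    0 ≤ 1 - d * (1 + d ^ n) / (1 + d) := by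
  rw [sub_nonneg, div_le_one (by positivity)]
  nlinarith [pow_le_one₀ hd0 hd1 (n := n)]

lemma hasSum_prod_of_nonneg {ι κ : Type*} {f : ι × κ → ℝ} (hf : 0 ≤ f) {g : ι → ℝ} {s : ℝ}
    (hfg : ∀ i, HasSum (fun j => f (i, j)) (g i)) (hg : HasSum g s) : HasSum f s := by
  have hsum : Summable f := (summable_prod_of_nonneg hf).2
    ⟨fun i => (hfg i).summable, by simpa only [fun i => (hfg i).tsum_eq] using hg.summable⟩
  exact (hsum.hasSum.prod_fiberwise hfg).unique hg ▸ hsum.hasSum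

section GaltonWatson

variable {β α : ℝ}

lemma gwStep_nonneg (hβ : 0 ≤ β) (hα : 0 ≤ α) (x y : ℕ) : 0 ≤ gwStep β α x y := by
  unfold gwStep
  positivity

lemma hasSum_gwStep (hβ : 0 ≤ β) (hα : 0 ≤ α) (x : ℕ) : HasSum (gwStep β α x) 1 :=
  ProbabilityTheory.hasSum_one_poissonMeasure ⟨β * x + α, by positivity⟩

lemma gwPath_cons (β α : ℝ) (x y n : ℕ) (ω : Fin n → ℕ) :
    gwPath β α x (n + 1) (Fin.cons y ω) = gwStep β α x y * gwPath β α y n ω := by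
  unfold gwPath
  rw [Fin.prod_univ_succ]
  refine congrArg₂ (· * ·) (by simp) (prod_congr rfl fun i _ => ?_)
  rw [Fin.cons_succ]
  refine congrArg₂ (gwStep β α) ?_ rfl
  by_cases h : (i : ℕ) = 0
  · have e0 : (⟨(i.succ : ℕ) - 1, Nat.lt_of_le_of_lt (Nat.sub_le _ _) i.succ.2⟩ : Fin (n + 1))
        = 0 := by simp [h]
    rw [if_pos h, if_neg (by simp), e0, Fin.cons_zero]
  · have e0 : (⟨(i.succ : ℕ) - 1, Nat.lt_of_le_of_lt (Nat.sub_le _ _) i.succ.2⟩ : Fin (n + 1))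
        = (⟨(i : ℕ) - 1, Nat.lt_of_le_of_lt (Nat.sub_le _ _) i.2⟩ : Fin n).succ := by
      simp only [Fin.ext_iff, Fin.val_succ]
      omega
    rw [if_neg h, if_neg (by simp), e0, Fin.cons_succ]

lemma gwPath_nonneg (hβ : 0 ≤ β) (hα : 0 ≤ α) (x n : ℕ) (ω : Fin n → ℕ) :
    0 ≤ gwPath β α x n ω :=
  prod_nonneg fun _ _ => gwStep_nonneg hβ hα _ _

lemma hasSum_gwPath (hβ : 0 ≤ β) (hα : 0 ≤ α) (n x : ℕ) : HasSum (gwPath β α x n) 1 := by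
  induction n generalizing x with
  | zero =>
    rw [show gwPath β α x 0 = fun _ => 1 from funext fun _ => by simp [gwPath]]
    exact hasSum_unique _
  | succ n ih =>
    rw [← (Fin.consEquiv fun _ => ℕ).hasSum_iff]
    refine hasSum_prod_of_nonneg (fun _ => gwPath_nonneg hβ hα _ _ _)
      (fun y => ?_) (hasSum_gwStep hβ hα x)
    simpa [Fin.consEquiv, gwPath_cons] using (ih y).mul_left (gwStep β α x y)

end GaltonWatson

section Hellinger

variable {βA αA βH αH lam : ℝ}

lemma gwStep_rpow_mul_rpow (hβA : 0 ≤ βA) (hαA : 0 ≤ αA) (hβH : 0 ≤ βH) (hαH : 0 ≤ αH)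
    (x y : ℕ) :
    gwStep βA αA x y ^ lam * gwStep βH αH x y ^ (1 - lam)
      = exp (-((lam * βA + (1 - lam) * βH) * x + (lam * αA + (1 - lam) * αH)))
        * ((βA * x + αA) ^ lam * (βH * x + αH) ^ (1 - lam)) ^ y / y.factorial := by
  have hA : 0 ≤ βA * x + αA := by positivity
  have hH : 0 ≤ βH * x + αH := by positivity
  have hfac : (0 : ℝ) < y.factorial := by positivity
  unfold gwStep
  rw [div_rpow (by positivity) hfac.le, div_rpow (by positivity) hfac.le,
    mul_rpow (exp_pos _).le (by positivity), mul_rpow (exp_pos _).le (by positivity),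
    ← exp_mul, ← exp_mul, ← rpow_pow_comm hA, ← rpow_pow_comm hH, div_mul_div_comm,
    mul_mul_mul_comm, ← exp_add, ← mul_pow, ← rpow_add hfac, add_sub_cancel, rpow_one]
  ring_nf

lemma summable_hellinger (hβA : 0 ≤ βA) (hαA : 0 ≤ αA) (hβH : 0 ≤ βH) (hαH : 0 ≤ αH)
    (h0 : 0 ≤ lam) (h1 : lam ≤ 1) (x n : ℕ) :
    Summable fun ω => gwPath βA αA x n ω ^ lam * gwPath βH αH x n ω ^ (1 - lam) :=
  .of_nonneg_of_le
    (fun ω => by have := gwPath_nonneg hβA hαA x n ω; have := gwPath_nonneg hβH hαH x n ω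
                 positivity)
    (fun ω => geom_mean_le_arith_mean2_weighted h0 (sub_nonneg.2 h1)
      (gwPath_nonneg hβA hαA x n ω) (gwPath_nonneg hβH hαH x n ω) (by ring))
    (((hasSum_gwPath hβA hαA n x).mul_left lam).add
      ((hasSum_gwPath hβH hαH n x).mul_left (1 - lam))).summable

lemma hasSum_hellinger_succ (hβA : 0 ≤ βA) (hαA : 0 ≤ αA) (hβH : 0 ≤ βH) (hαH : 0 ≤ αH)
    (h0 : 0 ≤ lam) (h1 : lam ≤ 1) (x n : ℕ) :
    HasSum (fun y => gwStep βA αA x y ^ lam * gwStep βH αH x y ^ (1 - lam)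
        * hellinger βA αA βH αH lam y n) (hellinger βA αA βH αH lam x (n + 1)) := by
  have hs := (summable_hellinger hβA hαA hβH hαH h0 h1 x (n + 1)).hasSum
  rw [← (Fin.consEquiv fun _ => ℕ).hasSum_iff] at hs
  refine hs.prod_fiberwise fun y => ?_
  have hfactor : ∀ ω : Fin n → ℕ,
      (gwStep βA αA x y * gwPath βA αA y n ω) ^ lam
        * (gwStep βH αH x y * gwPath βH αH y n ω) ^ (1 - lam)
      = gwStep βA αA x y ^ lam * gwStep βH αH x y ^ (1 - lam)
        * (gwPath βA αA y n ω ^ lam * gwPath βH αH y n ω ^ (1 - lam)) := fun ω => by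
    rw [mul_rpow (gwStep_nonneg hβA hαA _ _) (gwPath_nonneg hβA hαA _ _ _),
      mul_rpow (gwStep_nonneg hβH hαH _ _) (gwPath_nonneg hβH hαH _ _ _), mul_mul_mul_comm]
  simpa only [Function.comp, Fin.consEquiv, Equiv.coe_fn_mk, gwPath_cons, hfactor, hellinger] using
    (summable_hellinger hβA hαA hβH hαH h0 h1 y n).hasSum.mul_left
      (gwStep βA αA x y ^ lam * gwStep βH αH x y ^ (1 - lam))

theorem exp_aSeq_add_sum_bSeq_le_hellinger {βl αl p q : ℝ}
    (hβA : 0 ≤ βA) (hαA : 0 ≤ αA) (hβH : 0 ≤ βH) (hαH : 0 ≤ αH) (h0 : 0 < lam) (h1 : lam < 1)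
    (hβl : βl = lam * βA + (1 - lam) * βH) (hαl : αl = lam * αA + (1 - lam) * αH)
    (hp : p = αA ^ lam * αH ^ (1 - lam)) (hq : q = βA ^ lam * βH ^ (1 - lam)) (n x : ℕ) :
    exp (aSeq q βl n * x + ∑ k ∈ Icc 1 n, bSeq p q βl αl k)
      ≤ hellinger βA αA βH αH lam x n := by
  induction n generalizing x with
  | zero => simp [hellinger, gwPath, aSeq]
  | succ n ih =>
    set A := aSeq q βl n
    set B := ∑ k ∈ Icc 1 n, bSeq p q βl αl k
    set g := (βA * x + αA) ^ lam * (βH * x + αH) ^ (1 - lam)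
    have hminor : HasSum
        (fun y : ℕ => gwStep βA αA x y ^ lam * gwStep βH αH x y ^ (1 - lam) * exp (A * y + B))
        (exp (-(βl * x + αl)) * exp B * exp (g * exp A)) := by
      have hexp := NormedSpace.expSeries_div_hasSum_exp (g * exp A)
      rw [← exp_eq_exp_ℝ] at hexp
      refine (hexp.mul_left (exp (-(βl * x + αl)) * exp B)).congr_fun fun y => ?_
      rw [gwStep_rpow_mul_rpow hβA hαA hβH hαH, ← hβl, ← hαl, exp_add, mul_comm A,
        exp_nat_mul, mul_pow]
      ring
    have hg : q * x + p ≤ g := hq ▸ hp ▸ geom_mean_mul_add_le h0 h1 hβA hβH hαA hαH x.cast_nonneg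
    calc exp (aSeq q βl (n + 1) * x + ∑ k ∈ Icc 1 (n + 1), bSeq p q βl αl k)
        ≤ exp (-(βl * x + αl)) * exp B * exp (g * exp A) := by
          rw [sum_Icc_succ_top (by omega), ← exp_add, ← exp_add, exp_le_exp]
          change (q * exp A - βl) * x + (B + (p * exp A - αl)) ≤ _
          nlinarith [mul_le_mul_of_nonneg_right hg (exp_pos A).le]
      _ ≤ hellinger βA αA βH αH lam x (n + 1) :=
          hasSum_le (fun y => mul_le_mul_of_nonneg_left (ih y)
              (by have := gwStep_nonneg hβA hαA x y; have := gwStep_nonneg hβH hαH x y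
                  positivity))
            hminor (hasSum_hellinger_succ hβA hαA hβH hαH h0.le h1.le x n)

end Hellinger

noncomputable def lowerSeq (x₀ d : ℝ) (k : ℕ) : ℝ :=
  x₀ * (1 - d ^ k) + x₀ ^ 2 / 2 * (d ^ k * (1 - d ^ k) / (1 - d))

section LowerSeq

variable {x₀ d : ℝ}

lemma lowerSeq_succ_sub (hd : d ≠ 1) (k : ℕ) :
    lowerSeq x₀ d (k + 1) - x₀ = d * (lowerSeq x₀ d k - x₀ + (x₀ * d ^ k) ^ 2 / 2) := by
  have : 1 - d ≠ 0 := sub_ne_zero.2 hd.symm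
  simp only [lowerSeq]
  field_simp
  ring

lemma neg_mul_pow_le_lowerSeq_sub (hd0 : 0 ≤ d) (hd1 : d < 1) (k : ℕ) :
    -x₀ * d ^ k ≤ lowerSeq x₀ d k - x₀ := by
  have : 0 ≤ x₀ ^ 2 / 2 * (d ^ k * (1 - d ^ k) / (1 - d)) := by
    have := sub_nonneg.2 (pow_le_one₀ hd0 hd1.le (n := k))
    have := sub_pos.2 hd1
    positivity
  simp only [lowerSeq]
  linarith

lemma lowerSeq_succ_sub_lowerSeq (hd : d ≠ 1) (k : ℕ) :
    lowerSeq x₀ d (k + 1) - lowerSeq x₀ d k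
      = d ^ k * (x₀ * (1 - d) + x₀ ^ 2 / 2 * (d ^ k * (1 + d) - 1)) := by
  have : 1 - d ≠ 0 := sub_ne_zero.2 hd.symm
  simp only [lowerSeq]
  field_simp
  ring

lemma lowerSeq_succ_lt (hd0 : 0 < d) (hd1 : d < 1)
    (hx₀d : x₀ * (1 - d) + x₀ ^ 2 / 2 * (d * (1 + d) - 1) < 0) {k : ℕ} (hk : 1 ≤ k) :
    lowerSeq x₀ d (k + 1) < lowerSeq x₀ d k := by
  have hdk : d ^ k ≤ d := pow_le_of_le_one hd0.le hd1.le (by omega)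
  have hmono : x₀ ^ 2 / 2 * (d ^ k * (1 + d) - 1) ≤ x₀ ^ 2 / 2 * (d * (1 + d) - 1) := by
    gcongr
  rw [← sub_neg, lowerSeq_succ_sub_lowerSeq hd1.ne]
  exact mul_neg_of_pos_of_neg (pow_pos hd0 k) (by linarith)

lemma sum_Icc_lowerSeq (hd0 : 0 ≤ d) (hd1 : d < 1) (n : ℕ) :
    ∑ k ∈ Icc 1 n, lowerSeq x₀ d k
      = x₀ * (n - d * (1 - d ^ n) / (1 - d))
        + x₀ ^ 2 / 2 * (d * ((1 - d ^ n) / (1 - d) ^ 2) * (1 - d * (1 + d ^ n) / (1 + d))) := by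
  have : 1 - d ≠ 0 := (sub_pos.2 hd1).ne'
  have : 1 + d ≠ 0 := by positivity
  induction n with
  | zero => simp
  | succ n ih =>
    rw [sum_Icc_succ_top (by omega), ih, lowerSeq]
    field_simp
    push_cast
    ring

end LowerSeq

section FixedPoint

variable {q βl x₀ : ℝ}

lemma aSeq_nonpos (hq : 0 ≤ q) (hqβ : q ≤ βl) : ∀ k, aSeq q βl k ≤ 0
  | 0 => le_rfl
  | k + 1 => by
    have := exp_le_one_iff.2 (aSeq_nonpos hq hqβ k)
    change q * exp (aSeq q βl k) - βl ≤ 0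
    nlinarith

lemma aSeq_succ_sub (hfix : q * exp x₀ - βl = x₀) (k : ℕ) :
    aSeq q βl (k + 1) - x₀ = q * exp x₀ * (exp (aSeq q βl k - x₀) - 1) := by
  change q * exp (aSeq q βl k) - βl - x₀ = _
  rw [exp_sub, mul_sub, mul_one, mul_assoc, mul_div_cancel₀ _ (exp_pos x₀).ne']
  linarith

lemma mul_exp_lt_one_of_fixedPoint (hq : 0 < q) (hfix : q * exp x₀ - βl = x₀) (hx₀ : x₀ < 0)
    (hqβ : q < βl) : q * exp x₀ < 1 := by
  have hq' : q = q * exp x₀ * exp (-x₀) := by rw [mul_assoc, ← exp_add]; simp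
  nlinarith [mul_le_mul_of_nonneg_left (add_one_le_exp (-x₀)) (by positivity : 0 ≤ q * exp x₀)]

lemma lowerSeq_succ_lt_aSeq_succ (hq : 0 < q) (hfix : q * exp x₀ - βl = x₀) (hx₀ : x₀ < 0)
    (hd1 : q * exp x₀ < 1) {k : ℕ}
    (hk : lowerSeq x₀ (q * exp x₀) k ≤ aSeq q βl k) :
    lowerSeq x₀ (q * exp x₀) (k + 1) < aSeq q βl (k + 1) := by
  set d := q * exp x₀
  have hd0 : 0 < d := by positivity
  have ht : 0 < -x₀ * d ^ k := mul_pos (neg_pos.2 hx₀) (pow_pos hd0 k)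
  have htℓ := neg_mul_pow_le_lowerSeq_sub (x₀ := x₀) hd0.le hd1 k
  have hu : 0 < aSeq q βl k - x₀ := by linarith
  have hsq : (x₀ * d ^ k) ^ 2 ≤ (aSeq q βl k - x₀) ^ 2 := by nlinarith
  have hexp := cubic_le_exp_of_nonneg hu.le
  have hℓ : lowerSeq x₀ d k - x₀ + (x₀ * d ^ k) ^ 2 / 2 < exp (aSeq q βl k - x₀) - 1 := by
    nlinarith [pow_pos hu 3]
  have := lowerSeq_succ_sub (x₀ := x₀) hd1.ne k
  have := aSeq_succ_sub hfix k
  nlinarith [mul_lt_mul_of_pos_left hℓ hd0]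

lemma lowerSeq_le_aSeq (hq : 0 < q) (hfix : q * exp x₀ - βl = x₀) (hx₀ : x₀ < 0)
    (hd1 : q * exp x₀ < 1) :
    ∀ k, lowerSeq x₀ (q * exp x₀) k ≤ aSeq q βl k
  | 0 => by simp [lowerSeq, aSeq]
  | k + 1 => (lowerSeq_succ_lt_aSeq_succ hq hfix hx₀ hd1
      (lowerSeq_le_aSeq hq hfix hx₀ hd1 k)).le

lemma lowerSeq_lt_aSeq (hq : 0 < q) (hfix : q * exp x₀ - βl = x₀) (hx₀ : x₀ < 0)
    (hd1 : q * exp x₀ < 1) {k : ℕ} (hk : 1 ≤ k) :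
    lowerSeq x₀ (q * exp x₀) k < aSeq q βl k := by
  obtain ⟨m, rfl⟩ := Nat.exists_eq_add_of_le' hk
  exact lowerSeq_succ_lt_aSeq_succ hq hfix hx₀ hd1 (lowerSeq_le_aSeq hq hfix hx₀ hd1 m)

lemma lowerSeq_succ_lt_of_fixedPoint (hq : 0 < q) (hfix : q * exp x₀ - βl = x₀) (hx₀ : x₀ < 0)
    (hqβ : q < βl) {k : ℕ} (hk : 1 ≤ k) :
    lowerSeq x₀ (q * exp x₀) (k + 1) < lowerSeq x₀ (q * exp x₀) k := by
  have hd0 : 0 < q * exp x₀ := by positivity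
  have hexp : q * exp x₀ * (exp (-x₀) - 1) < -x₀ := by
    rw [mul_sub, mul_assoc, ← exp_add]
    simp only [add_neg_cancel, exp_zero, mul_one]
    linarith
  have := sq_mul_lt_of_mul_exp_sub_one_lt (neg_pos.2 hx₀) hd0 hexp
  exact lowerSeq_succ_lt hd0 (mul_exp_lt_one_of_fixedPoint hq hfix hx₀ hqβ)
    (by rw [neg_sq] at this; linarith) hk

end FixedPoint

noncomputable def boundExponent (ℓ : ℕ → ℝ) (r βl αl ω₀ : ℝ) (n : ℕ) : ℝ :=
  ℓ n * ω₀ + ∑ k ∈ Icc 1 n, (r * (ℓ k + βl) - αl)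

section BoundExponent

variable {ℓ ℓ' : ℕ → ℝ} {r βl αl ω₀ : ℝ}

lemma aSeq_mul_add_sum_bSeq {p q : ℝ} (hq : q ≠ 0) (n : ℕ) :
    aSeq q βl n * ω₀ + ∑ k ∈ Icc 1 n, bSeq p q βl αl k
      = boundExponent (aSeq q βl) (p / q) βl αl ω₀ n := by
  unfold boundExponent
  congr 1
  refine sum_congr rfl fun k hk => ?_
  obtain ⟨m, rfl⟩ := Nat.exists_eq_add_of_le' (mem_Icc.1 hk).1
  change p * exp (aSeq q βl m) - αl = p / q * (q * exp (aSeq q βl m) - βl + βl) - αl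
  field_simp
  ring

lemma boundExponent_lt_boundExponent (hr : 0 ≤ r) (hω₀ : 0 < ω₀) (hle : ∀ k, ℓ k ≤ ℓ' k)
    {n : ℕ} (hlt : ℓ n < ℓ' n) :
    boundExponent ℓ r βl αl ω₀ n < boundExponent ℓ' r βl αl ω₀ n := by
  have hsum : ∑ k ∈ Icc 1 n, (r * (ℓ k + βl) - αl) ≤ ∑ k ∈ Icc 1 n, (r * (ℓ' k + βl) - αl) := by
    gcongr with k
    exact hle k
  unfold boundExponent
  linarith [mul_lt_mul_of_pos_right hlt hω₀]

lemma boundExponent_succ (n : ℕ) :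
    boundExponent ℓ r βl αl ω₀ (n + 1) = boundExponent ℓ r βl αl ω₀ n
      + (ℓ (n + 1) - ℓ n) * ω₀ + (r * (ℓ (n + 1) + βl) - αl) := by
  unfold boundExponent
  rw [sum_Icc_succ_top (by omega)]
  ring

lemma boundExponent_lowerSeq {x₀ d : ℝ} (hd0 : 0 ≤ d) (hd1 : d < 1) (n : ℕ) :
    boundExponent (lowerSeq x₀ d) r βl αl ω₀ n
      = x₀ * (ω₀ - r * d / (1 - d)) * (1 - d ^ n) + (r * (βl + x₀) - αl) * n
        + x₀ ^ 2 / 2 * (d ^ n * (1 - d ^ n) / (1 - d)) * ω₀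
        + r * (d * x₀ ^ 2 / 2) * ((1 - d ^ n) / (1 - d) ^ 2)
          * (1 - d * (1 + d ^ n) / (1 + d)) := by
  have : 1 - d ≠ 0 := (sub_pos.2 hd1).ne'
  unfold boundExponent
  rw [sum_sub_distrib, ← mul_sum, sum_add_distrib, sum_Icc_lowerSeq hd0 hd1, lowerSeq]
  simp only [sum_const, Nat.card_Icc, add_tsub_cancel_right, nsmul_eq_mul]
  field_simp
  ring

lemma tendsto_boundExponent_lowerSeq_sub {x₀ d : ℝ} (hd0 : 0 ≤ d) (hd1 : d < 1) :
    Tendsto (fun n : ℕ => boundExponent (lowerSeq x₀ d) r βl αl ω₀ n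
        - (r * (βl + x₀) - αl) * n) atTop
      (𝓝 (x₀ * (ω₀ - r * d / (1 - d)) + r * (d * x₀ ^ 2 / 2) / (1 - d) ^ 2 * (1 - d / (1 + d)))) := by
  have hG : Continuous fun t : ℝ => x₀ * (ω₀ - r * d / (1 - d)) * (1 - t)
      + x₀ ^ 2 / 2 * (t * (1 - t) / (1 - d)) * ω₀
      + r * (d * x₀ ^ 2 / 2) * ((1 - t) / (1 - d) ^ 2) * (1 - d * (1 + t) / (1 + d)) := by
    fun_prop
  convert (hG.tendsto 0).comp (tendsto_pow_atTop_nhds_zero_of_lt_one hd0 hd1) using 2 with n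
  · simp only [Function.comp, boundExponent_lowerSeq hd0 hd1]
    ring
  · ring_nf

lemma tendsto_exp_boundExponent_lowerSeq_zero {x₀ d : ℝ} (hd0 : 0 ≤ d) (hd1 : d < 1) :
    Tendsto (fun n => exp (boundExponent (lowerSeq x₀ d) 0 βl 0 ω₀ n)) atTop
      (𝓝 (exp (ω₀ * x₀))) := by
  have h := (continuous_exp.tendsto _).comp
    (tendsto_boundExponent_lowerSeq_sub (x₀ := x₀) (r := 0) (βl := βl) (αl := 0) (ω₀ := ω₀) hd0 hd1)
  simp only [zero_mul, zero_div, sub_zero, add_zero] at h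
  simpa only [mul_comm ω₀, Function.comp_def] using h

end BoundExponent

lemma boundExponent_lowerSeq_succ_lt {p q βl αl x₀ ω₀ : ℝ} (hq : 0 < q)
    (hfix : q * exp x₀ - βl = x₀) (hx₀ : x₀ < 0) (hqβ : q < βl) (hp : 0 ≤ p) (hpα : p ≤ αl)
    (hω₀ : 0 < ω₀) {n : ℕ} (hn : 1 ≤ n) :
    boundExponent (lowerSeq x₀ (q * exp x₀)) (p / q) βl αl ω₀ (n + 1)
      < boundExponent (lowerSeq x₀ (q * exp x₀)) (p / q) βl αl ω₀ n := by
  have hdec := lowerSeq_succ_lt_of_fixedPoint hq hfix hx₀ hqβ hn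
  have hla := lowerSeq_lt_aSeq hq hfix hx₀ (mul_exp_lt_one_of_fixedPoint hq hfix hx₀ hqβ)
    (k := n + 1) (by omega)
  have hb : p / q * (aSeq q βl (n + 1) + βl) - αl ≤ 0 := by
    change p / q * (q * exp (aSeq q βl n) - βl + βl) - αl ≤ 0
    rw [sub_add_cancel, ← mul_assoc, div_mul_cancel₀ p hq.ne']
    nlinarith [exp_le_one_iff.2 (aSeq_nonpos hq.le hqβ.le n)]
  have := mul_le_mul_of_nonneg_left hla.le (div_nonneg hp hq.le)
  rw [boundExponent_succ]
  nlinarith [mul_lt_mul_of_pos_right hdec hω₀]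

/-- Closed-form lower bounds `C_n^L` for the Hellinger integral on
`P_NI ∪ P_SP` with `β_A ≠ β_H`, built from `p★ = α_A^λ α_H^{1−λ}`, `q★ = β_A^λ β_H^{1−λ}`,
the negative fixed point `x₀` of `x ↦ q★·e^x − β_λ`, `d_T = q★·e^{x₀}` and
`Γ = (q★/2)·e^{x₀}·x₀²`. -/
theorem hellinger_closed_form_lower (βA βH αA αH lam : ℝ)
    (hβA : 0 < βA) (hβH : 0 < βH) (hβne : βA ≠ βH)
    (hclass : (αA = 0 ∧ αH = 0) ∨ (0 < αA ∧ 0 < αH))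
    (hlam : lam ∈ Set.Ioo (0 : ℝ) 1) (ω₀ : ℕ) (hω₀ : 1 ≤ ω₀)
    (βl αl pstar qstar : ℝ)
    (hβl : βl = lam * βA + (1 - lam) * βH) (hαl : αl = lam * αA + (1 - lam) * αH)
    (hp : pstar = αA ^ lam * αH ^ (1 - lam)) (hq : qstar = βA ^ lam * βH ^ (1 - lam))
    (x₀ : ℝ) (hx₀neg : x₀ < 0) (hx₀fix : qstar * Real.exp x₀ - βl = x₀)
    (dT Γ : ℝ) (hdT : dT = qstar * Real.exp x₀) (hΓ : Γ = (qstar / 2) * Real.exp x₀ * x₀ ^ 2)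
    (ζ ϑ C : ℕ → ℝ)
    (hζ : ∀ n : ℕ, 1 ≤ n → ζ n = Γ * dT ^ (n - 1) * (1 - dT ^ n) / (1 - dT))
    (hϑ : ∀ n : ℕ, 1 ≤ n → ϑ n = (pstar / qstar) * Γ * ((1 - dT ^ n) / (1 - dT) ^ 2)
      * (1 - dT * (1 + dT ^ n) / (1 + dT)))
    (hC : ∀ n : ℕ, 1 ≤ n →
      C n = Real.exp (x₀ * ((ω₀ : ℝ) - (pstar / qstar) * dT / (1 - dT)) * (1 - dT ^ n)
        + ((pstar / qstar) * (βl + x₀) - αl) * (n : ℝ) + ζ n * (ω₀ : ℝ) + ϑ n)) :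
    (0 < qstar ∧ qstar < βl) ∧
    (∀ n : ℕ, 1 ≤ n → C n < hellinger βA αA βH αH lam ω₀ n ∧ 0 < ζ n ∧ 0 ≤ ϑ n) ∧
    (∀ n : ℕ, 1 ≤ n → C (n + 1) < C n) ∧
    (∀ n : ℕ, 1 ≤ n →
      C n < Real.exp (aSeq qstar βl n * (ω₀ : ℝ)
        + ∑ k ∈ Finset.Icc 1 n, bSeq pstar qstar βl αl k)) ∧
    ((0 < αA ∧ 0 < αH → Tendsto C atTop (nhds 0)) ∧
      (αA = 0 ∧ αH = 0 → Tendsto C atTop (nhds (Real.exp ((ω₀ : ℝ) * x₀))))) ∧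
    Tendsto (fun n : ℕ => (1 / (n : ℝ)) * Real.log (C n)) atTop
      (nhds ((pstar / qstar) * (x₀ + βl) - αl)) := by
  obtain ⟨hl0, hl1⟩ := hlam
  obtain ⟨hαA, hαH⟩ : 0 ≤ αA ∧ 0 ≤ αH := by
    rcases hclass with ⟨h, h'⟩ | ⟨h, h'⟩ <;> constructor <;> linarith
  have hq0 : 0 < qstar := hq ▸ by positivity
  have hp0 : 0 ≤ pstar := hp ▸ by positivity
  have hqβ : qstar < βl := hq ▸ hβl ▸ (geom_mean_lt_arith_mean2_weighted_iff_of_pos hl0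
    (sub_pos.2 hl1) hβA.le hβH.le (by ring)).2 hβne
  have hpα : pstar ≤ αl := hp ▸ hαl ▸
    geom_mean_le_arith_mean2_weighted hl0.le (sub_pos.2 hl1).le hαA hαH (by ring)
  subst hdT hΓ
  have hd0 : 0 < qstar * exp x₀ := by positivity
  have hd1 := mul_exp_lt_one_of_fixedPoint hq0 hx₀fix hx₀neg hqβ
  have hω : (0 : ℝ) < ω₀ := by exact_mod_cast hω₀
  set E := boundExponent (lowerSeq x₀ (qstar * exp x₀)) (pstar / qstar) βl αl ω₀ with hE
  have hCE : ∀ n, 1 ≤ n → C n = exp (E n) := by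
    intro n hn
    obtain ⟨m, rfl⟩ := Nat.exists_eq_add_of_le' hn
    rw [hC _ hn, hζ _ hn, hϑ _ hn, hE, boundExponent_lowerSeq hd0.le hd1, Nat.add_sub_cancel]
    congr 1
    ring
  have hCev : C =ᶠ[atTop] fun n => exp (E n) := eventually_atTop.2 ⟨1, hCE⟩
  have hupper : ∀ n, 1 ≤ n → C n < exp (aSeq qstar βl n * ω₀
      + ∑ k ∈ Icc 1 n, bSeq pstar qstar βl αl k) := fun n hn => by
    rw [hCE n hn, exp_lt_exp, aSeq_mul_add_sum_bSeq hq0.ne']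
    exact boundExponent_lt_boundExponent (div_nonneg hp0 hq0.le) hω
      (lowerSeq_le_aSeq hq0 hx₀fix hx₀neg hd1) (lowerSeq_lt_aSeq hq0 hx₀fix hx₀neg hd1 hn)
  have hlim := tendsto_boundExponent_lowerSeq_sub (x₀ := x₀) (r := pstar / qstar) (βl := βl)
    (αl := αl) (ω₀ := ω₀) hd0.le hd1
  refine ⟨⟨hq0, hqβ⟩, fun n hn => ⟨(hupper n hn).trans_le ?_, ?_, ?_⟩, fun n hn => ?_, hupper,
    ⟨fun ⟨hA, hH⟩ => ?_, fun ⟨hA, hH⟩ => ?_⟩, ?_⟩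
  · exact exp_aSeq_add_sum_bSeq_le_hellinger hβA.le hαA hβH.le hαH hl0 hl1 hβl hαl hp hq n ω₀
  · have := sub_pos.2 (pow_lt_one₀ hd0.le hd1 (by omega : n ≠ 0))
    have := sub_pos.2 hd1
    have := hx₀neg.ne
    rw [hζ n hn]
    positivity
  · have := sub_pos.2 (pow_lt_one₀ hd0.le hd1 (by omega : n ≠ 0))
    have := one_sub_mul_one_add_pow_div_nonneg hd0.le hd1.le n
    rw [hϑ n hn]
    positivity
  · rw [hCE n hn, hCE (n + 1) (by omega), exp_lt_exp]
    exact boundExponent_lowerSeq_succ_lt hq0 hx₀fix hx₀neg hqβ hp0 hpα hω hn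
  · have hp_pos : 0 < pstar := hp ▸ by positivity
    have hM : pstar / qstar * (βl + x₀) - αl < 0 := by
      rw [← hx₀fix, add_sub_cancel, ← mul_assoc, div_mul_cancel₀ _ hq0.ne']
      nlinarith [exp_lt_one_iff.2 hx₀neg]
    exact (tendsto_exp_nhds_zero_of_sub_mul hlim hM).congr' hCev.symm
  · have hp' : pstar = 0 := by rw [hp, hA, zero_rpow hl0.ne', zero_mul]
    have hαl' : αl = 0 := by rw [hαl, hA, hH]; ring
    rw [hp', zero_div, hαl'] at hE
    rw [hE] at hCev
    exact (tendsto_exp_boundExponent_lowerSeq_zero hd0.le hd1).congr' hCev.symm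
  · rw [add_comm x₀]
    refine (tendsto_inv_mul_of_sub_mul hlim).congr' (hCev.mono fun n hn => ?_)
    simp only [hn, log_exp, hE]
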